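/- Let S(θ) = -1/(1+r_f) + μαθ/(λ(a+bθ)·(1+r_f)) (target sensitivity with P(θ)(1+r_f) = a+bθ) and G(θ) = -ψ/(1+r_f)·(1 + A(γ-κ)θ(1+r_f)/(a+bθ)) (path sensitivity). If μα·a > 0 and ψA(γ-κ)a > 0, then S'(θ) > 0 and G'(θ) < 0 for all θ ≥ 0, so the model generates the asymmetric pattern: ESG improves (makes less negative) target-surprise sensitivity and worsens (makes more negative) path-surprise sensitivity simultaneously. -/

import Mathlib

/-! Both sensitivities are affine functions of `θ / (a + bθ)`, whose derivative
`a / (a + bθ)²` is positive; the signs of the two derivatives are therefore the signs of the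
coefficients `μα / (λ(1 + r_f)) > 0` and `-ψA(γ - κ) < 0`. -/

section DivAffine

variable {𝕜 : Type*} [NontriviallyNormedField 𝕜] {a b x : 𝕜}

lemma hasDerivAt_div_affine (h : a + b * x ≠ 0) :
    HasDerivAt (fun t => t / (a + b * t)) (a / (a + b * x) ^ 2) x := by
  have hden : HasDerivAt (fun t => a + b * t) b x := by
    simpa using ((hasDerivAt_id' x).const_mul b).const_add a
  have hquot := (hasDerivAt_id' x).fun_div hden h
  rwa [show 1 * (a + b * x) - x * b = a by ring] at hquot

lemma deriv_add_mul_div_affine (d c : 𝕜) (h : a + b * x ≠ 0) :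
    deriv (fun t => d + c * (t / (a + b * t))) x = c * (a / (a + b * x) ^ 2) :=
  (((hasDerivAt_div_affine h).const_mul c).const_add d).deriv

end DivAffine

/-- Asymmetric pattern: the target-surprise sensitivity
`S(θ) = -1/(1+r_f) + μαθ/(λ(a+bθ)(1+r_f))` has strictly positive derivative and
the path-surprise sensitivity
`G(θ) = -ψ/(1+r_f)·(1 + A(γ-κ)θ(1+r_f)/(a+bθ))` has strictly negative
derivative for all `θ ≥ 0`. -/
theorem asymmetric_pattern_derivatives
    (a b rf mu alpha lam psi A gamma kappa : ℝ)
    (ha : 0 < a) (hb : 0 ≤ b) (hrf : -1 < rf)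
    (hmu : 0 < mu) (halpha : 0 < alpha) (hlam : 0 < lam)
    (hpsi : 0 < psi) (hA : 0 < A) (hgk : kappa < gamma) :
    ∀ theta : ℝ, 0 ≤ theta →
      0 < deriv (fun t : ℝ =>
            -(1 / (1 + rf)) + mu * alpha * t / (lam * (a + b * t) * (1 + rf))) theta
      ∧ deriv (fun t : ℝ =>
            -(psi / (1 + rf)) * (1 + A * (gamma - kappa) * t * (1 + rf) / (a + b * t)))
          theta < 0 := by
  intro θ hθ
  have hrf' : 0 < 1 + rf := by linarith
  have hgk' : 0 < gamma - kappa := sub_pos.mpr hgk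
  have hden : 0 < a + b * θ := add_pos_of_pos_of_nonneg ha (mul_nonneg hb hθ)
  have hslope : 0 < a / (a + b * θ) ^ 2 := div_pos ha (pow_pos hden 2)
  have hS : (fun t : ℝ => -(1 / (1 + rf)) + mu * alpha * t / (lam * (a + b * t) * (1 + rf)))
      = fun t => -(1 / (1 + rf)) + mu * alpha / (lam * (1 + rf)) * (t / (a + b * t)) := by
    funext t
    simp only [div_eq_mul_inv, mul_inv]
    ring
  have hG : (fun t : ℝ =>
        -(psi / (1 + rf)) * (1 + A * (gamma - kappa) * t * (1 + rf) / (a + b * t)))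
      = fun t => -(psi / (1 + rf)) + -(psi * A * (gamma - kappa)) * (t / (a + b * t)) := by
    funext t
    field_simp
    ring
  rw [hS, hG, deriv_add_mul_div_affine _ _ hden.ne', deriv_add_mul_div_affine _ _ hden.ne']
  refine ⟨by positivity, mul_neg_of_neg_of_pos ?_ hslope⟩
  exact neg_neg_of_pos (by positivity)
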